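/- arXiv:2407.07654 — 8 statements merged into one kernel-verified Lean document; each statement's English description precedes it below -/
import Mathlib

section
/- Let n > 3 be an integer and let b ∈ {2, −2}. Then the n×n Toeplitz matrix Tₙ = T̃ₙ(b, b) (tridiagonal with diagonal b and off-diagonal −1) is invertible, its inverse is symmetric, and for all indices 1 ≤ j ≤ i ≤ n, the (i,j)-entry of Tₙ⁻¹ equals (2/b)^(i+1−j) · j·(n+1−i)/(n+1). -/
open Matrix BigOperators Finset

/-!
For `b = 2` the matrix is the discrete Dirichlet Laplacian, whose inverse is its Green's function
`G i k = (min i k + 1) (n - max i k) / (n + 1)`: as a function of `i ∈ ℤ` it vanishes at `-1` and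
`n` and is linear on either side of `k`, with a unit drop of slope at `k`. In general write
`b = 2c` with `c² = 1`; conjugating by `D = diag(c^i)` gives `T̃(2c, 2c) = c • D T̃(2, 2) D`, and
since `D² = 1` the inverse is `c • D G D`, with entries `c^(i+j+1) G i j`.
-/
/-- The symmetric tridiagonal near-Toeplitz matrix with corner diagonal entries `bt`,
interior diagonal entries `b`, and off-diagonal entries `-1` (0-based indices). -/
noncomputable def Ttilde (n : ℕ) (b bt : ℝ) : Matrix (Fin n) (Fin n) ℝ :=
  Matrix.of fun i j =>
    if (i : ℕ) = (j : ℕ) then (if (i : ℕ) = 0 ∨ (i : ℕ) = n - 1 then bt else b)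
    else if (i : ℕ) + 1 = (j : ℕ) ∨ (j : ℕ) + 1 = (i : ℕ) then (-1 : ℝ) else 0

/-- The maximum absolute row sum (operator norm induced by the sup norm). -/
noncomputable def normInf {n : ℕ} (A : Matrix (Fin n) (Fin n) ℝ) : ℝ :=
  ⨆ i : Fin n, ∑ j : Fin n, |A i j|

lemma Ttilde_apply_eq_int (n : ℕ) (b : ℝ) (i j : Fin n) :
    Ttilde n b b i j = (if (j : ℤ) = i then b else 0) - (if (j : ℤ) = i - 1 then 1 else 0)
      - (if (j : ℤ) = i + 1 then 1 else 0) := by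
  simp only [Ttilde, of_apply, ite_self]
  split_ifs <;> first | (exfalso; omega) | ring

lemma sum_fin_ite_int_eq {n : ℕ} (f : ℤ → ℝ) (h₀ : f (-1) = 0) (hn : f n = 0) {m : ℤ}
    (hm₀ : -1 ≤ m) (hmn : m ≤ n) :
    ∑ j : Fin n, (if (j : ℤ) = m then f j else 0) = f m := by
  by_cases hm : 0 ≤ m ∧ m < n
  · obtain ⟨k, rfl⟩ := Int.eq_ofNat_of_zero_le hm.1
    have hk : k < n := by omega
    rw [Finset.sum_eq_single ⟨k, hk⟩]
    · simp
    · intro j _ hj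
      rw [if_neg]
      intro h
      exact hj (Fin.ext (by simpa using h))
    · simp
  · rw [Finset.sum_eq_zero]
    · rcases (by omega : m = -1 ∨ m = n) with h | h <;> simp [h, h₀, hn]
    · intro j _
      rw [if_neg]
      omega

lemma sum_Ttilde_mul_eq {n : ℕ} (b : ℝ) (f : ℤ → ℝ) (h₀ : f (-1) = 0) (hn : f n = 0)
    (i : Fin n) :
    ∑ j : Fin n, Ttilde n b b i j * f j = b * f i - f (i - 1) - f (i + 1) := by
  simp only [Ttilde_apply_eq_int, sub_mul, ite_mul, zero_mul, one_mul, Finset.sum_sub_distrib]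
  have hi := i.isLt
  rw [sum_fin_ite_int_eq (fun j => b * f j) (by simp [h₀]) (by simp [hn]) (by omega) (by omega),
    sum_fin_ite_int_eq f h₀ hn (by omega) (by omega),
    sum_fin_ite_int_eq f h₀ hn (by omega) (by omega)]

-- Integer indices, so that the zero boundary values at `-1` and `n` can be stated.
noncomputable def green (n : ℕ) (i k : ℤ) : ℝ :=
  ((min i k + 1) * (n - max i k) : ℤ) / (n + 1)

lemma green_comm (n : ℕ) (i k : ℤ) : green n i k = green n k i := by
  rw [green, green, min_comm, max_comm]

lemma green_neg_one_left (n : ℕ) {k : ℤ} (hk : 0 ≤ k) : green n (-1) k = 0 := by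
  simp [green, min_eq_left (by omega : (-1 : ℤ) ≤ k)]

lemma green_n_left (n : ℕ) {k : ℤ} (hk : k ≤ n) : green n n k = 0 := by
  simp [green, max_eq_left hk]

lemma green_second_diff (n : ℕ) (i k : ℤ) :
    2 * green n i k - green n (i - 1) k - green n (i + 1) k = if i = k then 1 else 0 := by
  have hn : (n : ℝ) + 1 ≠ 0 := by positivity
  rcases lt_trichotomy i k with h | rfl | h
  · rw [if_neg h.ne]
    simp only [green, min_eq_left (by omega : i ≤ k), min_eq_left (by omega : i - 1 ≤ k),
      min_eq_left (by omega : i + 1 ≤ k), max_eq_right (by omega : i ≤ k),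
      max_eq_right (by omega : i - 1 ≤ k), max_eq_right (by omega : i + 1 ≤ k)]
    field_simp
    push_cast
    ring
  · rw [if_pos rfl]
    simp only [green, min_self, max_self, min_eq_left (by omega : i - 1 ≤ i),
      min_eq_right (by omega : i ≤ i + 1), max_eq_right (by omega : i - 1 ≤ i),
      max_eq_left (by omega : i ≤ i + 1)]
    field_simp
    push_cast
    ring
  · rw [if_neg h.ne']
    simp only [green, min_eq_right (by omega : k ≤ i), min_eq_right (by omega : k ≤ i - 1),
      min_eq_right (by omega : k ≤ i + 1), max_eq_left (by omega : k ≤ i),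
      max_eq_left (by omega : k ≤ i - 1), max_eq_left (by omega : k ≤ i + 1)]
    field_simp
    push_cast
    ring

lemma green_natCast_of_le (n : ℕ) {i k : ℕ} (h : k ≤ i) :
    green n i k = ((k : ℝ) + 1) * ((n : ℝ) - i) / ((n : ℝ) + 1) := by
  simp only [green, min_eq_right (by omega : (k : ℤ) ≤ i), max_eq_left (by omega : (k : ℤ) ≤ i)]
  push_cast
  ring

noncomputable def greenMatrix (n : ℕ) : Matrix (Fin n) (Fin n) ℝ :=
  Matrix.of fun i k => green n i k

lemma Ttilde_two_mul_greenMatrix (n : ℕ) : Ttilde n 2 2 * greenMatrix n = 1 := by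
  ext i k
  have hk := k.isLt
  rw [mul_apply, one_apply]
  simp only [greenMatrix, of_apply]
  rw [sum_Ttilde_mul_eq 2 (fun j => green n j k) (green_neg_one_left n (by omega))
    (green_n_left n (by omega)), green_second_diff]
  simp only [Int.natCast_inj, Fin.val_inj]

noncomputable def powDiagonal (n : ℕ) (c : ℝ) : Matrix (Fin n) (Fin n) ℝ :=
  diagonal fun i => c ^ (i : ℕ)

lemma powDiagonal_mul_self {n : ℕ} {c : ℝ} (hc : c ^ 2 = 1) :
    powDiagonal n c * powDiagonal n c = 1 := by
  rw [powDiagonal, diagonal_mul_diagonal, ← diagonal_one]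
  congr 1
  ext i
  rw [← pow_add, ← two_mul, pow_mul, hc, one_pow]

lemma Ttilde_mul_eq_smul_powDiagonal_conj (n : ℕ) (b bt : ℝ) {c : ℝ} (hc : c ^ 2 = 1) :
    Ttilde n (c * b) (c * bt) = c • (powDiagonal n c * Ttilde n b bt * powDiagonal n c) := by
  ext i j
  have hpow (k : ℕ) : c ^ k * c ^ k = 1 := by rw [← mul_pow, ← sq, hc, one_pow]
  simp only [Ttilde, powDiagonal, diagonal_mul, mul_diagonal, Matrix.smul_apply, of_apply,
    smul_eq_mul]
  split_ifs with hij _ hadj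
  · rw [← hij]
    linear_combination (-(c * bt)) * hpow i
  · rw [← hij]
    linear_combination (-(c * b)) * hpow i
  · rcases hadj with h | h
    · rw [← h, pow_succ]
      linear_combination c ^ 2 * hpow i + hc
    · rw [← h, pow_succ]
      linear_combination c ^ 2 * hpow j + hc
  · ring

lemma Ttilde_mul_smul_conj_greenMatrix (n : ℕ) {c : ℝ} (hc : c ^ 2 = 1) :
    Ttilde n (c * 2) (c * 2) * (c • (powDiagonal n c * greenMatrix n * powDiagonal n c)) = 1 := by
  rw [Ttilde_mul_eq_smul_powDiagonal_conj n 2 2 hc, smul_mul_smul_comm, ← sq, hc, one_smul]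
  calc powDiagonal n c * Ttilde n 2 2 * powDiagonal n c *
        (powDiagonal n c * greenMatrix n * powDiagonal n c)
      = powDiagonal n c * (Ttilde n 2 2 * (powDiagonal n c * powDiagonal n c) * greenMatrix n)
          * powDiagonal n c := by simp only [Matrix.mul_assoc]
    _ = 1 := by
      rw [powDiagonal_mul_self hc, Matrix.mul_one, Ttilde_two_mul_greenMatrix, Matrix.mul_one,
        powDiagonal_mul_self hc]

lemma smul_conj_greenMatrix_apply (n : ℕ) (c : ℝ) (i j : Fin n) :
    (c • (powDiagonal n c * greenMatrix n * powDiagonal n c)) i j =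
      c ^ ((i : ℕ) + j + 1) * green n i j := by
  simp only [powDiagonal, greenMatrix, diagonal_mul, mul_diagonal, Matrix.smul_apply, of_apply,
    smul_eq_mul]
  ring

theorem stmt0_general (n : ℕ) (b : ℝ) (hb : b = 2 ∨ b = -2) :
    IsUnit (Ttilde n b b) ∧
    ((Ttilde n b b)⁻¹)ᵀ = (Ttilde n b b)⁻¹ ∧
    ∀ i j : Fin n, (j : ℕ) ≤ (i : ℕ) →
      (Ttilde n b b)⁻¹ i j =
        (2 / b) ^ ((i : ℕ) + 1 - (j : ℕ)) *
          ((((j : ℕ) : ℝ) + 1) * ((n : ℝ) - ((i : ℕ) : ℝ)) / ((n : ℝ) + 1)) := by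
  set c := 2 / b
  have hc : c ^ 2 = 1 := by rcases hb with rfl | rfl <;> norm_num [c]
  have hbc : b = c * 2 := by rcases hb with rfl | rfl <;> norm_num [c]
  have hright := Ttilde_mul_smul_conj_greenMatrix n hc
  rw [← hbc] at hright
  have hinv := inv_eq_right_inv hright
  refine ⟨(isUnit_iff_isUnit_det _).2 (isUnit_det_of_right_inverse hright), ?_, ?_⟩
  · ext i j
    rw [transpose_apply, hinv, smul_conj_greenMatrix_apply, smul_conj_greenMatrix_apply,
      green_comm, Nat.add_comm (j : ℕ)]
  · intro i j hji
    rw [hinv, smul_conj_greenMatrix_apply, green_natCast_of_le n hji,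
      show (i : ℕ) + j + 1 = ((i : ℕ) + 1 - j) + 2 * j by omega, pow_add, pow_mul, hc, one_pow,
      mul_one]

theorem stmt0 (n : ℕ) (hn : 3 < n) (b : ℝ) (hb : b = 2 ∨ b = -2) :
    IsUnit (Ttilde n b b) ∧
    ((Ttilde n b b)⁻¹)ᵀ = (Ttilde n b b)⁻¹ ∧
    ∀ i j : Fin n, (j : ℕ) ≤ (i : ℕ) →
      (Ttilde n b b)⁻¹ i j =
        (2 / b) ^ ((i : ℕ) + 1 - (j : ℕ)) *
          ((((j : ℕ) : ℝ) + 1) * ((n : ℝ) - ((i : ℕ) : ℝ)) / ((n : ℝ) + 1)) :=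
  stmt0_general n b hb
end

section
/- Let n > 3 be an integer, b ∈ {2, −2}, and b̃ ∈ ℝ be such that T̃ₙ(b, b̃) is invertible, and set β = b̃ − b. Then for all indices 1 ≤ j ≤ i ≤ n, the (i,j)-entry of T̃ₙ(b, b̃)⁻¹ equals (2/b)^(i+1−j) · [ (j·(1 + 2β/b) − 2β/b) · ((n−i)·(1 + 2β/b) + 1) ] / [ (1 + 2β/b) · (n + 1 + (2β/b)·(n−1)) ], and the (i,j)-entry equals the (j,i)-entry for i < j. -/
open Matrix BigOperators Finset

lemma sum_ite_eq_coe {n : ℕ} (m : ℕ) (a : Fin n → ℝ) :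
    ∑ j : Fin n, (if (j : ℕ) = m then a j else 0) =
      if h : m < n then a ⟨m, h⟩ else 0 := by
  split_ifs with h
  · rw [Finset.sum_eq_single (⟨m, h⟩ : Fin n)]
    · simp
    · intro j _ hj
      rw [if_neg]
      intro hjm
      exact hj (Fin.ext hjm)
    · simp
  · apply Finset.sum_eq_zero
    intro j _
    rw [if_neg]
    intro hjm
    exact h (hjm ▸ j.isLt)

lemma Ttilde_apply_eq {n : ℕ} (b bt : ℝ) (i j : Fin n) :
    Ttilde n b bt i j =
      (if (j : ℕ) = (i : ℕ) then (if (i : ℕ) = 0 ∨ (i : ℕ) = n - 1 then bt else b) else 0)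
      + (if (j : ℕ) = (i : ℕ) + 1 then -1 else 0)
      + (if (j : ℕ) + 1 = (i : ℕ) then -1 else 0) := by
  show (if (i : ℕ) = (j : ℕ) then (if (i : ℕ) = 0 ∨ (i : ℕ) = n - 1 then bt else b)
    else if (i : ℕ) + 1 = (j : ℕ) ∨ (j : ℕ) + 1 = (i : ℕ) then (-1 : ℝ) else 0) = _
  split_ifs <;> first | omega | ring1

lemma tri_sum {n : ℕ} (b bt : ℝ) (x : Fin n → ℝ) (i : Fin n) :
    ∑ j : Fin n, Ttilde n b bt i j * x j =
      (if (i : ℕ) = 0 ∨ (i : ℕ) = n - 1 then bt else b) * x i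
        - (if h : (i : ℕ) + 1 < n then x ⟨(i : ℕ) + 1, h⟩ else 0)
        - (if h : (i : ℕ) ≠ 0 then
            x ⟨(i : ℕ) - 1, Nat.lt_of_le_of_lt (Nat.sub_le _ _) i.isLt⟩ else 0) := by
  simp_rw [Ttilde_apply_eq b bt i, add_mul, Finset.sum_add_distrib, ite_mul, zero_mul,
    neg_one_mul]
  rw [sum_ite_eq_coe (i : ℕ) (fun j => if (i : ℕ) = 0 ∨ (i : ℕ) = n - 1 then bt * x j else b * x j)]
  rw [sum_ite_eq_coe ((i : ℕ) + 1) (fun j => -x j)]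
  rw [dif_pos i.isLt]
  have e2 : (if h : (i:ℕ)+1 < n then -x ⟨(i:ℕ)+1, h⟩ else 0)
      = -(if h : (i:ℕ)+1 < n then x ⟨(i:ℕ)+1, h⟩ else 0) := by
    split <;> simp
  rw [e2]
  by_cases hi : (i : ℕ) = 0
  · have h3 : ∀ j : Fin n, ((j : ℕ) + 1 = (i : ℕ)) = False := by
      intro j; simp [hi]
    simp_rw [h3, if_false, Finset.sum_const_zero]
    rw [dif_neg (by simp [hi] : ¬ (i:ℕ) ≠ 0)]
    simp only [Fin.eta]
    split_ifs <;> ring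
  · have h3 : ∀ j : Fin n, ((j : ℕ) + 1 = (i : ℕ)) = ((j : ℕ) = (i : ℕ) - 1) := by
      intro j; apply propext; omega
    simp_rw [h3]
    rw [sum_ite_eq_coe ((i : ℕ) - 1) (fun j => -x j)]
    rw [dif_pos (Nat.lt_of_le_of_lt (Nat.sub_le _ _) i.isLt), dif_pos hi]
    simp only [Fin.eta]
    split_ifs <;> ring

/-- candidate inverse -/
noncomputable def Bmat (n : ℕ) (c β : ℝ) : Matrix (Fin n) (Fin n) ℝ :=
  Matrix.of fun i j =>
    c ^ ((i : ℕ) + (j : ℕ) + 1) *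
      (((min (i : ℕ) (j : ℕ) : ℕ) : ℝ) + 1 + ((min (i : ℕ) (j : ℕ) : ℕ) : ℝ) * β) *
      (((n : ℝ) - ((max (i : ℕ) (j : ℕ) : ℕ) : ℝ)) +
        ((n : ℝ) - 1 - ((max (i : ℕ) (j : ℕ) : ℕ) : ℝ)) * β) /
      ((1 + β) * ((n : ℝ) + 1 + β * ((n : ℝ) - 1)))

lemma Bmat_apply (n : ℕ) (c β : ℝ) (p q : ℕ) (hp : p < n) (hq : q < n) :
    Bmat n c β ⟨p, hp⟩ ⟨q, hq⟩ =
      c ^ (p + q + 1) * (((min p q : ℕ) : ℝ) + 1 + ((min p q : ℕ) : ℝ) * β) *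
      (((n : ℝ) - ((max p q : ℕ) : ℝ)) + ((n : ℝ) - 1 - ((max p q : ℕ) : ℝ)) * β) /
      ((1 + β) * ((n : ℝ) + 1 + β * ((n : ℝ) - 1))) := rfl

lemma not_isUnit_of_mulVec_eq_zero {n : ℕ} {M : Matrix (Fin n) (Fin n) ℝ} {x : Fin n → ℝ}
    (hx : x ≠ 0) (h : M.mulVec x = 0) : ¬ IsUnit M := by
  intro hM
  obtain ⟨u, hu⟩ := hM
  have h1 : (↑u⁻¹ : Matrix (Fin n) (Fin n) ℝ) * M = 1 := by rw [← hu]; exact u.inv_mul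
  apply hx
  calc x = (1 : Matrix (Fin n) (Fin n) ℝ).mulVec x := (Matrix.one_mulVec x).symm
    _ = ((↑u⁻¹ : Matrix (Fin n) (Fin n) ℝ) * M).mulVec x := by rw [h1]
    _ = (↑u⁻¹ : Matrix (Fin n) (Fin n) ℝ).mulVec (M.mulVec x) := by
        rw [← Matrix.mulVec_mulVec]
    _ = 0 := by rw [h, Matrix.mulVec_zero]

lemma ker_alpha (n : ℕ) (hn : 3 < n) (c β : ℝ) (hc : c = 1 ∨ c = -1) (hβ : 1 + β = 0) :
    ¬ IsUnit (Ttilde n (2*c) (c*(β+2))) := by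
  have hcsq : c ^ 2 = 1 := by rcases hc with rfl | rfl <;> norm_num
  apply not_isUnit_of_mulVec_eq_zero (x := fun j : Fin n => c ^ (j : ℕ))
  · intro h
    have h0 := congrFun h ⟨0, by omega⟩
    simp at h0
  · funext i
    show ∑ j, Ttilde n (2*c) (c*(β+2)) i j * c ^ (j : ℕ) = 0
    have hts := tri_sum (2*c) (c*(β+2)) (fun j : Fin n => c ^ (j : ℕ)) i
    simp only at hts
    rw [hts]
    rcases i with ⟨I, hI⟩
    simp only [Fin.val_mk]
    by_cases hI0 : I = 0
    · subst hI0
      rw [if_pos (Or.inl rfl), dif_pos (by omega : 0+1 < n), dif_neg (by simp : ¬(0:ℕ) ≠ 0)]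
      linear_combination c * hβ
    · obtain ⟨m, rfl⟩ : ∃ m, I = m + 1 := ⟨I - 1, by omega⟩
      by_cases hIn : m + 1 = n - 1
      · rw [if_pos (Or.inr hIn), dif_neg (by omega : ¬ m+1+1 < n), dif_pos (by omega : m+1 ≠ 0)]
        simp only [Nat.add_sub_cancel]
        linear_combination c^m * hβ + (β+2) * c^m * hcsq
      · rw [if_neg (by omega), dif_pos (by omega : m+1+1 < n), dif_pos (by omega : m+1 ≠ 0)]
        simp only [Nat.add_sub_cancel]
        linear_combination c^m * hcsq

lemma ker_D (n : ℕ) (hn : 3 < n) (c β : ℝ) (hc : c = 1 ∨ c = -1)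
    (hD0 : (n:ℝ) + 1 + β * ((n:ℝ) - 1) = 0) :
    ¬ IsUnit (Ttilde n (2*c) (c*(β+2))) := by
  have hcsq : c ^ 2 = 1 := by rcases hc with rfl | rfl <;> norm_num
  apply not_isUnit_of_mulVec_eq_zero
    (x := fun j : Fin n => c ^ (j : ℕ) * (((j : ℕ) : ℝ) + 1 + ((j : ℕ) : ℝ) * β))
  · intro h
    have h0 := congrFun h ⟨0, by omega⟩
    simp at h0
  · funext i
    show ∑ j, Ttilde n (2*c) (c*(β+2)) i j * (c ^ (j : ℕ) * (((j : ℕ) : ℝ) + 1 + ((j : ℕ) : ℝ) * β)) = 0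
    have hts := tri_sum (2*c) (c*(β+2))
      (fun j : Fin n => c ^ (j : ℕ) * (((j : ℕ) : ℝ) + 1 + ((j : ℕ) : ℝ) * β)) i
    simp only at hts
    rw [hts]
    rcases i with ⟨I, hI⟩
    simp only [Fin.val_mk]
    by_cases hI0 : I = 0
    · subst hI0
      rw [if_pos (Or.inl rfl), dif_pos (by omega : 0+1 < n), dif_neg (by simp : ¬(0:ℕ) ≠ 0)]
      push_cast
      ring
    · obtain ⟨m, rfl⟩ : ∃ m, I = m + 1 := ⟨I - 1, by omega⟩
      by_cases hIn : m + 1 = n - 1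
      · rw [if_pos (Or.inr hIn), dif_neg (by omega : ¬ m+1+1 < n), dif_pos (by omega : m+1 ≠ 0)]
        simp only [Nat.add_sub_cancel]
        have hmr : (m : ℝ) = (n : ℝ) - 2 := by
          have h2 : m + 2 = n := by omega
          push_cast [← h2]
          ring
        push_cast
        rw [hmr]
        linear_combination (c^m * (β+2) * ((n:ℝ) + ((n:ℝ)-1)*β)) * hcsq + (c^m * (1+β)) * hD0
      · rw [if_neg (by omega), dif_pos (by omega : m+1+1 < n), dif_pos (by omega : m+1 ≠ 0)]
        simp only [Nat.add_sub_cancel]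
        push_cast
        linear_combination (c^m * ((m:ℝ) + 1 + (m:ℝ)*β)) * hcsq

set_option maxHeartbeats 2000000 in
lemma mul_B (n : ℕ) (hn : 3 < n) (c β : ℝ) (hc : c = 1 ∨ c = -1)
    (hα : 1 + β ≠ 0) (hD : (n:ℝ) + 1 + β * ((n:ℝ) - 1) ≠ 0) :
    Ttilde n (2*c) (c*(β+2)) * Bmat n c β = 1 := by
  have hcsq : c ^ 2 = 1 := by rcases hc with rfl | rfl <;> norm_num
  have hpow1 : ∀ m : ℕ, c ^ (2*m) = 1 := by
    intro m; rw [pow_mul, hcsq, one_pow]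
  have hpow2 : ∀ m : ℕ, c ^ (2*m+1) = c := by
    intro m; rw [pow_succ, hpow1, one_mul]
  ext i k
  rw [Matrix.mul_apply, Matrix.one_apply]
  rcases i with ⟨I, hI⟩
  rcases k with ⟨K, hK⟩
  have hts := tri_sum (2*c) (c*(β+2)) (fun j : Fin n => Bmat n c β j ⟨K, hK⟩) ⟨I, hI⟩
  simp only at hts
  rw [hts]
  simp only [Fin.val_mk, Fin.mk.injEq]
  by_cases hI0 : I = 0
  · subst hI0
    rw [if_pos (Or.inl rfl), dif_pos (by omega : 0+1 < n), dif_neg (by simp : ¬(0:ℕ) ≠ 0)]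
    rw [Bmat_apply, Bmat_apply]
    by_cases hK0 : K = 0
    · subst hK0
      rw [if_pos rfl]
      norm_num
      rcases hc with rfl | rfl <;> field_simp <;> ring
    · rw [if_neg (by omega : ¬ (0:ℕ) = K)]
      rw [min_eq_left (show (0:ℕ) ≤ K by omega), max_eq_right (show (0:ℕ) ≤ K by omega),
          min_eq_left (show 0+1 ≤ K by omega), max_eq_right (show 0+1 ≤ K by omega)]
      push_cast
      rcases hc with rfl | rfl <;> field_simp <;> ring
  · by_cases hIn : I = n - 1
    · subst hIn
      rw [if_pos (Or.inr rfl), dif_neg (by omega : ¬ n-1+1 < n), dif_pos (by omega : n-1 ≠ 0)]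
      rw [Bmat_apply, Bmat_apply]
      by_cases hKn : K = n - 1
      · subst hKn
        rw [if_pos rfl]
        rw [min_eq_left (show n-1-1 ≤ n-1 by omega), max_eq_right (show n-1-1 ≤ n-1 by omega),
            min_self, max_self]
        rw [show n-1-1+(n-1)+1 = 2*(n-1) by omega, hpow1,
            show (n-1)+(n-1)+1 = 2*(n-1)+1 by omega, hpow2]
        rw [Nat.cast_sub (show 1 ≤ n-1 by omega), Nat.cast_sub (show 1 ≤ n by omega)]
        push_cast
        rcases hc with rfl | rfl <;> field_simp <;> ring
      · rw [if_neg (by omega : ¬ n-1 = K)]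
        rw [min_eq_right (show K ≤ n-1 by omega), max_eq_left (show K ≤ n-1 by omega),
            min_eq_right (show K ≤ n-1-1 by omega), max_eq_left (show K ≤ n-1-1 by omega)]
        rw [show (n-1)+K+1 = ((n-1-1)+K+1)+1 by omega]
        rw [Nat.cast_sub (show 1 ≤ n-1 by omega), Nat.cast_sub (show 1 ≤ n by omega)]
        push_cast
        rcases hc with rfl | rfl <;> field_simp <;> ring
    · rw [if_neg (by omega : ¬ (I = 0 ∨ I = n-1)), dif_pos (by omega : I+1 < n),
          dif_pos (by omega : I ≠ 0)]
      rw [Bmat_apply, Bmat_apply, Bmat_apply]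
      rcases Nat.lt_trichotomy K I with hKI | rfl | hKI
      · rw [if_neg (by omega : ¬ I = K)]
        rw [min_eq_right (show K ≤ I by omega), max_eq_left (show K ≤ I by omega),
            min_eq_right (show K ≤ I+1 by omega), max_eq_left (show K ≤ I+1 by omega),
            min_eq_right (show K ≤ I-1 by omega), max_eq_left (show K ≤ I-1 by omega)]
        rw [show I+K+1 = ((I-1)+K+1)+1 by omega,
            show (I+1)+K+1 = ((I-1)+K+1)+2 by omega]
        rw [Nat.cast_sub (show 1 ≤ I by omega)]
        push_cast
        rcases hc with rfl | rfl <;> field_simp <;> ring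
      · rw [if_pos rfl]
        rw [min_self, max_self,
            min_eq_right (show K ≤ K+1 by omega), max_eq_left (show K ≤ K+1 by omega),
            min_eq_left (show K-1 ≤ K by omega), max_eq_right (show K-1 ≤ K by omega)]
        rw [show K+K+1 = 2*K+1 by omega, hpow2,
            show (K+1)+K+1 = 2*(K+1) by omega, hpow1,
            show (K-1)+K+1 = 2*K by omega, hpow1]
        rw [Nat.cast_sub (show 1 ≤ K by omega)]
        push_cast
        rcases hc with rfl | rfl <;> field_simp <;> ring
      · rw [if_neg (by omega : ¬ I = K)]
        rw [min_eq_left (show I ≤ K by omega), max_eq_right (show I ≤ K by omega),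
            min_eq_left (show I+1 ≤ K by omega), max_eq_right (show I+1 ≤ K by omega),
            min_eq_left (show I-1 ≤ K by omega), max_eq_right (show I-1 ≤ K by omega)]
        rw [show I+K+1 = ((I-1)+K+1)+1 by omega,
            show (I+1)+K+1 = ((I-1)+K+1)+2 by omega]
        rw [Nat.cast_sub (show 1 ≤ I by omega)]
        push_cast
        rcases hc with rfl | rfl <;> field_simp <;> ring

theorem stmt1 (n : ℕ) (hn : 3 < n) (b bt : ℝ) (hb : b = 2 ∨ b = -2)
    (hinv : IsUnit (Ttilde n b bt)) :
    (∀ i j : Fin n, (j : ℕ) ≤ (i : ℕ) →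
      (Ttilde n b bt)⁻¹ i j =
        (2 / b) ^ ((i : ℕ) + 1 - (j : ℕ)) *
          (((((j : ℕ) : ℝ) + 1) * (1 + 2 * (bt - b) / b) - 2 * (bt - b) / b) *
            (((n : ℝ) - 1 - ((i : ℕ) : ℝ)) * (1 + 2 * (bt - b) / b) + 1)) /
          ((1 + 2 * (bt - b) / b) * ((n : ℝ) + 1 + (2 * (bt - b) / b) * ((n : ℝ) - 1)))) ∧
    (∀ i j : Fin n, (i : ℕ) < (j : ℕ) → (Ttilde n b bt)⁻¹ i j = (Ttilde n b bt)⁻¹ j i) := by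
  set c := 2 / b with hc_def
  set β := 2 * (bt - b) / b with hβ_def
  have hc : c = 1 ∨ c = -1 := by
    rcases hb with rfl | rfl
    · left; rw [hc_def]; norm_num
    · right; rw [hc_def]; norm_num
  have hTb : b = 2 * c := by
    rcases hb with rfl | rfl <;> rw [hc_def] <;> norm_num
  have hTbt : bt = c * (β + 2) := by
    rcases hb with rfl | rfl <;> rw [hc_def, hβ_def] <;> ring
  have hT : Ttilde n b bt = Ttilde n (2*c) (c*(β+2)) := by rw [← hTb, ← hTbt]
  rw [hT] at hinv
  have hα : 1 + β ≠ 0 := fun h0 => ker_alpha n hn c β hc h0 hinv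
  have hD : (n:ℝ) + 1 + β * ((n:ℝ) - 1) ≠ 0 := fun h0 => ker_D n hn c β hc h0 hinv
  have hmul : Ttilde n b bt * Bmat n c β = 1 := by
    rw [hT]; exact mul_B n hn c β hc hα hD
  have hieq : (Ttilde n b bt)⁻¹ = Bmat n c β := Matrix.inv_eq_right_inv hmul
  constructor
  · intro i j hij
    rw [hieq]
    rcases i with ⟨I, hI⟩
    rcases j with ⟨J, hJ⟩
    simp only [Fin.val_mk] at hij ⊢
    rw [Bmat_apply]
    rw [min_eq_right hij, max_eq_left hij]
    have hpw : c ^ (I + J + 1) = c ^ (I + 1 - J) := by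
      rcases hc with h1 | h1 <;> rw [h1]
      · simp
      · rw [show I+J+1 = (I+1-J) + 2*J by omega, pow_add, pow_mul]
        norm_num
    rw [hpw]
    ring
  · intro i j _
    rw [hieq]
    show Bmat n c β i j = Bmat n c β j i
    unfold Bmat
    simp only [Matrix.of_apply]
    rw [min_comm (i : ℕ) (j : ℕ), max_comm (i : ℕ) (j : ℕ), Nat.add_comm (i : ℕ) (j : ℕ)]
end

section
/- Let n > 3 be an integer and b ∈ {2, −2}. If b̃ = sgn(b) or b̃ = sgn(b)·(n−3)/(n−1), then the matrix T̃ₙ(b, b̃) is singular (its determinant is zero). -/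
open Matrix BigOperators Finset

/-!
For `b = 2s` with `s = ±1`, the interior rows of `T̃ₙ(b, b̃) v = 0` form the recurrence
`v (j-1) - 2s v j + v (j+1) = 0`, whose characteristic polynomial is `(x - s)²`; its solutions are
`v j = s ^ j (α + β j)`. Such a vector lies in the kernel exactly when the first and last rows
hold, which are two linear conditions on `b̃`. The choice `(α, β) = (1, 0)` gives `b̃ = s`, and
`(α, β) = (1 - n, 2)` gives `b̃ = s (n - 3) / (n - 1)`.
-/

theorem Ttilde_mulVec_apply (n : ℕ) (b bt : ℝ) (v : ℕ → ℝ) (i : Fin n) :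
    (Ttilde n b bt *ᵥ fun j => v j) i =
      (if (i : ℕ) = 0 ∨ (i : ℕ) = n - 1 then bt else b) * v i
        - (if 0 < (i : ℕ) then v (i - 1) else 0)
        - (if (i : ℕ) + 1 < n then v (i + 1) else 0) := by
  set d := if (i : ℕ) = 0 ∨ (i : ℕ) = n - 1 then bt else b
  have hentry : ∀ j : Fin n, Ttilde n b bt i j * v j =
      (if (j : ℕ) = i then d * v j else 0)
        - (if 0 < (i : ℕ) then (if (j : ℕ) = i - 1 then v j else 0) else 0)
        - (if (j : ℕ) = i + 1 then v j else 0) := by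
    intro j
    simp only [Ttilde, of_apply, d]
    split_ifs <;> first | ring1 | (exfalso; omega)
  have hprev : (i : ℕ) - 1 < n := by omega
  simp only [mulVec, dotProduct, hentry]
  rw [Fin.sum_univ_eq_sum_range (fun j => (if j = (i : ℕ) then d * v j else 0)
        - (if 0 < (i : ℕ) then (if j = i - 1 then v j else 0) else 0)
        - (if j = i + 1 then v j else 0)), sum_sub_distrib, sum_sub_distrib, sum_ite_eq',
    sum_ite_eq', ← ite_sum_zero, sum_ite_eq']
  simp [hprev]

theorem det_Ttilde_eq_zero_of_boundary_conditions {n : ℕ} (hn : 2 ≤ n) {s bt α β : ℝ}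
    (hs : s ^ 2 = 1) (hα : α ≠ 0) (hfirst : bt * α = s * (α + β))
    (hlast : s * bt * (α + β * (n - 1)) = α + β * (n - 2)) :
    (Ttilde n (2 * s) bt).det = 0 := by
  set v : ℕ → ℝ := fun j => s ^ j * (α + β * j)
  rw [← exists_mulVec_eq_zero_iff]
  refine ⟨fun j => v j, fun h => hα (by simpa [v] using congrFun h ⟨0, by omega⟩), ?_⟩
  funext i
  rw [Ttilde_mulVec_apply, Pi.zero_apply]
  obtain ⟨_ | k, hi⟩ := i
  · simp only [v, true_or, ↓reduceIte, lt_self_iff_false, if_pos (show 0 + 1 < n by omega)]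
    push_cast
    linear_combination hfirst
  · simp only [if_pos k.succ_pos, Nat.add_sub_cancel]
    by_cases hk : k + 1 = n - 1
    · obtain rfl : n = k + 2 := by omega
      simp only [v, if_pos (Or.inr hk), if_neg (show ¬ k + 1 + 1 < k + 2 by omega)]
      push_cast at hlast ⊢
      linear_combination s ^ k * hlast
    · simp only [v, if_neg (show ¬ (k + 1 = 0 ∨ k + 1 = n - 1) by omega),
        if_pos (show k + 1 + 1 < n by omega)]
      push_cast
      linear_combination s ^ k * (2 * (α + β * (k + 1)) - (α + β * (k + 1 + 1))) * hs

theorem stmt2 (n : ℕ) (hn : 3 < n) (b bt : ℝ) (hb : b = 2 ∨ b = -2)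
    (hbt : bt = Real.sign b ∨ bt = Real.sign b * (((n : ℝ) - 3) / ((n : ℝ) - 1))) :
    (Ttilde n b bt).det = 0 := by
  obtain ⟨s, rfl, hsign, hs⟩ : ∃ s : ℝ, b = 2 * s ∧ Real.sign b = s ∧ s ^ 2 = 1 := by
    rcases hb with rfl | rfl
    · exact ⟨1, by norm_num, Real.sign_of_pos two_pos, by norm_num⟩
    · exact ⟨-1, by norm_num, Real.sign_of_neg (by norm_num), by norm_num⟩
  have hn1 : (n : ℝ) - 1 ≠ 0 := by
    have : (4 : ℝ) ≤ n := by exact_mod_cast hn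
    linarith
  rw [hsign] at hbt
  rcases hbt with rfl | rfl
  · exact det_Ttilde_eq_zero_of_boundary_conditions (α := 1) (β := 0) (by omega) hs one_ne_zero
      (by ring) (by linear_combination hs)
  · refine det_Ttilde_eq_zero_of_boundary_conditions (α := 1 - n) (β := 2) (by omega) hs
      (by rwa [← neg_sub, neg_ne_zero]) ?_ ?_
    · field_simp
      ring
    · field_simp
      linear_combination ((n : ℝ) - 1) * ((n : ℝ) - 3) * hs
end

section
/- Let n > 3 be an integer, b ∈ {2, −2}, b̃ ∈ ℝ, and β = b̃ − b. Define Δ = (1 + β·t_{n,n})² − β²·(t_{n,1})², where t_{n,n} = (2/b)·n/(n+1) and t_{n,1} = (2/b)ⁿ·1/(n+1) are the (n,n)- and (n,1)-entries of the inverse of the Toeplitz matrix Tₙ = tridiag(−1, b, −1). Then Δ = ((n−1)/(n+1)) · (b̃ − sgn(b)) · (b̃ − sgn(b)·(n−3)/(n−1)); in particular, Δ ≥ 0 whenever |b̃| ≥ 1. -/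
open Matrix BigOperators Finset

theorem stmt3 (n : ℕ) (hn : 3 < n) (b bt : ℝ) (hb : b = 2 ∨ b = -2) :
    ((1 + (bt - b) * ((2 / b) * (n : ℝ) / ((n : ℝ) + 1))) ^ 2
        - (bt - b) ^ 2 * ((2 / b) ^ n * (1 / ((n : ℝ) + 1))) ^ 2
      = (((n : ℝ) - 1) / ((n : ℝ) + 1)) * (bt - Real.sign b) *
          (bt - Real.sign b * (((n : ℝ) - 3) / ((n : ℝ) - 1)))) ∧
    (1 ≤ |bt| →
      0 ≤ (1 + (bt - b) * ((2 / b) * (n : ℝ) / ((n : ℝ) + 1))) ^ 2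
            - (bt - b) ^ 2 * ((2 / b) ^ n * (1 / ((n : ℝ) + 1))) ^ 2) := by
  have hc : (3 : ℝ) < (n : ℝ) := by exact_mod_cast hn
  have h1 : (0 : ℝ) < (n : ℝ) + 1 := by linarith
  have h2 : (0 : ℝ) < (n : ℝ) - 1 := by linarith
  have hpow : (((-1 : ℝ)) ^ n) ^ 2 = 1 := by
    rw [← pow_mul, mul_comm, pow_mul]; simp
  have key : (1 + (bt - b) * ((2 / b) * (n : ℝ) / ((n : ℝ) + 1))) ^ 2
        - (bt - b) ^ 2 * ((2 / b) ^ n * (1 / ((n : ℝ) + 1))) ^ 2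
      = (((n : ℝ) - 1) / ((n : ℝ) + 1)) * (bt - Real.sign b) *
          (bt - Real.sign b * (((n : ℝ) - 3) / ((n : ℝ) - 1))) := by
    rcases hb with rfl | rfl
    · rw [show Real.sign 2 = 1 from Real.sign_of_pos (by norm_num)]
      norm_num
      field_simp
      ring
    · rw [show Real.sign (-2) = -1 from Real.sign_of_neg (by norm_num)]
      have : ((2 : ℝ) / (-2)) = -1 := by norm_num
      rw [this, mul_pow, hpow]
      field_simp
      ring
  refine ⟨key, fun hbt => ?_⟩
  rw [key]
  have hr0 : (0 : ℝ) ≤ ((n : ℝ) - 3) / ((n : ℝ) - 1) := by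
    apply div_nonneg <;> linarith
  have hr1 : ((n : ℝ) - 3) / ((n : ℝ) - 1) ≤ 1 := by
    rw [div_le_one h2]; linarith
  have hq : (0 : ℝ) ≤ ((n : ℝ) - 1) / ((n : ℝ) + 1) := by
    apply div_nonneg <;> linarith
  have hs : Real.sign b = 1 ∨ Real.sign b = -1 := by
    rcases hb with rfl | rfl
    · left; exact Real.sign_of_pos (by norm_num)
    · right; exact Real.sign_of_neg (by norm_num)
  set r := ((n : ℝ) - 3) / ((n : ℝ) - 1) with hrdef
  rcases le_abs.mp hbt with h | h <;> rcases hs with hs | hs <;> rw [hs]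
  · exact mul_nonneg (mul_nonneg hq (by linarith)) (by nlinarith)
  · exact mul_nonneg (mul_nonneg hq (by linarith)) (by nlinarith)
  · have h0 : 0 ≤ (-(bt - 1)) * (-(bt - 1 * r)) := by
      apply mul_nonneg <;> linarith
    rw [mul_assoc]
    exact mul_nonneg hq (by nlinarith)
  · have h0 : 0 ≤ (-(bt - (-1))) * (-(bt - (-1) * r)) := by
      apply mul_nonneg <;> linarith
    rw [mul_assoc]
    exact mul_nonneg hq (by nlinarith)
end

section
/- Let n > 3 be an integer, b ∈ {2, −2}, and b̃ ∈ ℝ be such that T̃ₙ(b, b̃) is invertible, and set β = b̃ − b. Then the trace of T̃ₙ(b, b̃)⁻¹ equals n(n+2)/(3b) − 2βn / (3·(1 + 2β/b)) + βn / (3·(1 + 2β/b)·(n + 1 + (2β/b)·(n−1))). -/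
/-!
For `b = 2s` with `s = ±1`, `T̃ₙ(b, b̃)` is a discrete Sturm–Liouville operator: its rows away
from the corners encode the recurrence `2s·w_k = w_{k-1} + w_{k+1}`, whose characteristic
polynomial has the double root `s`, so its solutions are `s^k (α + kγ)`. The solution
`u_k = s^k (1 + kc)` satisfies the boundary condition of the first row and
`v_k = s^k (1 + (n-1-k)c)` that of the last row, where `c = s b̃ - 1`. Their Casoratian
`u_{k+1} v_k - u_k v_{k+1}` is the constant `W = s c (2 + (n-1)c)`, and the Green's function
`u_{min(i,j)} v_{max(i,j)} / W` is the inverse matrix whenever `W ≠ 0`; if `W = 0`, then `u` is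
a null vector, so invertibility forces `W ≠ 0`. The trace is then `∑ u_k v_k / W`, a sum of
quadratics in `k`.
-/

open Matrix BigOperators Finset

section Green

variable {n : ℕ} {b bt : ℝ}

theorem sum_fin_ite_val_eq (a : ℕ) (x : ℝ) :
    ∑ j : Fin n, (if (j : ℕ) = a then x else 0) = if a < n then x else 0 := by
  rw [Fin.sum_univ_eq_sum_range (fun j => if j = a then x else 0), sum_ite_eq']
  simp

theorem sum_Ttilde_mul (f : ℕ → ℝ) (i : Fin n) :
    ∑ j : Fin n, Ttilde n b bt i j * f j =
      (if (i : ℕ) = 0 ∨ (i : ℕ) = n - 1 then bt else b) * f i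
        - (if (i : ℕ) + 1 < n then f (i + 1) else 0)
        - (if (i : ℕ) ≠ 0 then f (i - 1) else 0) := by
  have hsummand : ∀ j : Fin n, Ttilde n b bt i j * f j =
      (if (j : ℕ) = i then (if (i : ℕ) = 0 ∨ (i : ℕ) = n - 1 then bt else b) * f i else 0)
        - (if (j : ℕ) = i + 1 then f (i + 1) else 0)
        - (if (i : ℕ) ≠ 0 then (if (j : ℕ) = i - 1 then f (i - 1) else 0) else 0) := by
    intro j
    simp only [Ttilde, of_apply]
    split_ifs <;> grind
  simp only [hsummand, sum_sub_distrib, sum_fin_ite_val_eq, sum_ite_irrel, sum_const_zero]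
  grind

variable {u v : ℕ → ℝ} {W : ℝ}

theorem sum_Ttilde_mul_green_of_lt (hu₀ : bt * u 0 = u 1)
    (hu : ∀ i, 0 < i → i + 1 < n → b * u i = u (i - 1) + u (i + 1)) {i k : Fin n} (hik : i < k) :
    ∑ j : Fin n, Ttilde n b bt i j * (u (min j k) * v (max j k)) = 0 := by
  rw [sum_Ttilde_mul (fun m => u (min m k) * v (max m k))]
  rw [Fin.lt_def] at hik
  have hk := k.isLt
  simp (disch := omega) only [min_eq_left, max_eq_right]
  obtain h0 | h0 := Nat.eq_zero_or_pos (i : ℕ)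
  · simp (disch := omega) only [if_pos, if_neg]
    simp only [h0, zero_add]
    linear_combination v k * hu₀
  · simp (disch := omega) only [if_pos, if_neg]
    linear_combination v k * hu i h0 (by omega)

theorem sum_Ttilde_mul_green_of_gt (hvₙ : bt * v (n - 1) = v (n - 2))
    (hv : ∀ i, 0 < i → i + 1 < n → b * v i = v (i - 1) + v (i + 1)) {i k : Fin n} (hik : k < i) :
    ∑ j : Fin n, Ttilde n b bt i j * (u (min j k) * v (max j k)) = 0 := by
  rw [sum_Ttilde_mul (fun m => u (min m k) * v (max m k))]
  rw [Fin.lt_def] at hik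
  have hi := i.isLt
  simp (disch := omega) only [min_eq_right, max_eq_left]
  obtain h1 | h1 : (i : ℕ) = n - 1 ∨ (i : ℕ) + 1 < n := by omega
  · simp (disch := omega) only [if_pos, if_neg]
    rw [h1, show n - 1 - 1 = n - 2 by omega]
    linear_combination u k * hvₙ
  · simp (disch := omega) only [if_pos, if_neg]
    linear_combination u k * hv i (by omega) h1

theorem sum_Ttilde_mul_green_self (hn : 2 ≤ n) (hu₀ : bt * u 0 = u 1)
    (hu : ∀ i, 0 < i → i + 1 < n → b * u i = u (i - 1) + u (i + 1))
    (hvₙ : bt * v (n - 1) = v (n - 2))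
    (hW : ∀ i, i + 1 < n → u (i + 1) * v i - u i * v (i + 1) = W) (i : Fin n) :
    ∑ j : Fin n, Ttilde n b bt i j * (u (min j i) * v (max j i)) = W := by
  rw [sum_Ttilde_mul (fun m => u (min m i) * v (max m i))]
  have hi := i.isLt
  simp (disch := omega) only [min_self, max_self, min_eq_left, max_eq_right, min_eq_right,
    max_eq_left]
  obtain h0 | h0 := Nat.eq_zero_or_pos (i : ℕ)
  · simp (disch := omega) only [if_pos, if_neg]
    simp only [h0, zero_add]
    linear_combination v 0 * hu₀ + hW 0 (by omega)
  obtain h1 | h1 : (i : ℕ) = n - 1 ∨ (i : ℕ) + 1 < n := by omega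
  · simp (disch := omega) only [if_pos, if_neg]
    have hWₙ := hW (n - 2) (by omega)
    rw [h1, show n - 1 - 1 = n - 2 by omega]
    rw [show n - 2 + 1 = n - 1 by omega] at hWₙ
    linear_combination u (n - 1) * hvₙ + hWₙ
  · simp (disch := omega) only [if_pos, if_neg]
    linear_combination v i * hu i h0 h1 + hW i h1

theorem Ttilde_mul_green (hn : 2 ≤ n) (hu₀ : bt * u 0 = u 1)
    (hu : ∀ i, 0 < i → i + 1 < n → b * u i = u (i - 1) + u (i + 1))
    (hvₙ : bt * v (n - 1) = v (n - 2))
    (hv : ∀ i, 0 < i → i + 1 < n → b * v i = v (i - 1) + v (i + 1))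
    (hW : ∀ i, i + 1 < n → u (i + 1) * v i - u i * v (i + 1) = W) :
    Ttilde n b bt * of (fun i j : Fin n => u (min i j) * v (max i j)) = W • 1 := by
  ext i k
  simp only [mul_apply, of_apply, Matrix.smul_apply, one_apply, smul_eq_mul]
  rcases lt_trichotomy i k with hik | rfl | hik
  · rw [sum_Ttilde_mul_green_of_lt hu₀ hu hik, if_neg hik.ne, mul_zero]
  · rw [sum_Ttilde_mul_green_self hn hu₀ hu hvₙ hW, if_pos rfl, mul_one]
  · rw [sum_Ttilde_mul_green_of_gt hvₙ hv hik, if_neg hik.ne', mul_zero]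

theorem trace_inv_Ttilde (hn : 2 ≤ n) (hu₀ : bt * u 0 = u 1)
    (hu : ∀ i, 0 < i → i + 1 < n → b * u i = u (i - 1) + u (i + 1))
    (hvₙ : bt * v (n - 1) = v (n - 2))
    (hv : ∀ i, 0 < i → i + 1 < n → b * v i = v (i - 1) + v (i + 1))
    (hW : ∀ i, i + 1 < n → u (i + 1) * v i - u i * v (i + 1) = W) (hW₀ : W ≠ 0) :
    trace (Ttilde n b bt)⁻¹ = (∑ k ∈ range n, u k * v k) / W := by
  have hinv : Ttilde n b bt * (W⁻¹ • of (fun i j : Fin n => u (min i j) * v (max i j))) = 1 := by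
    rw [Matrix.mul_smul, Ttilde_mul_green hn hu₀ hu hvₙ hv hW, smul_smul, inv_mul_cancel₀ hW₀,
      one_smul]
  rw [inv_eq_right_inv hinv, trace_smul, trace, div_eq_inv_mul, smul_eq_mul]
  simp only [diag_apply, of_apply, min_self, max_self]
  rw [Fin.sum_univ_eq_sum_range (fun k => u k * v k)]

theorem Ttilde_mulVec_eq_zero (hn : 2 ≤ n) (hu₀ : bt * u 0 = u 1)
    (hu : ∀ i, 0 < i → i + 1 < n → b * u i = u (i - 1) + u (i + 1))
    (huₙ : bt * u (n - 1) = u (n - 2)) :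
    Ttilde n b bt *ᵥ (fun i => u i) = 0 := by
  funext i
  have hi := i.isLt
  simp only [mulVec, dotProduct, sum_Ttilde_mul u, Pi.zero_apply]
  obtain h0 | h0 := Nat.eq_zero_or_pos (i : ℕ)
  · simp (disch := omega) only [if_pos, if_neg]
    simp only [h0, zero_add]
    linear_combination hu₀
  obtain h1 | h1 : (i : ℕ) = n - 1 ∨ (i : ℕ) + 1 < n := by omega
  · simp (disch := omega) only [if_pos, if_neg]
    rw [h1, show n - 1 - 1 = n - 2 by omega]
    linear_combination huₙ
  · simp (disch := omega) only [if_pos, if_neg]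
    linear_combination hu i h0 h1

theorem not_isUnit_Ttilde (hn : 2 ≤ n) (hu₀ : bt * u 0 = u 1)
    (hu : ∀ i, 0 < i → i + 1 < n → b * u i = u (i - 1) + u (i + 1))
    (huₙ : bt * u (n - 1) = u (n - 2)) (hne : u 0 ≠ 0) :
    ¬IsUnit (Ttilde n b bt) := by
  intro h
  have hzero : (fun i : Fin n => u i) = 0 :=
    mulVec_injective_iff_isUnit.2 h (by rw [Ttilde_mulVec_eq_zero hn hu₀ hu huₙ, mulVec_zero])
  exact hne (congrFun hzero ⟨0, by omega⟩)

end Green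

def affineSeq (s α γ : ℝ) (k : ℕ) : ℝ := s ^ k * (α + k * γ)

section AffineSeq

variable {s : ℝ} (α γ α' γ' : ℝ)

theorem pow_mul_self_of_sq_eq_one (hs : s ^ 2 = 1) (k : ℕ) : s ^ k * s ^ k = 1 := by
  rw [← mul_pow, ← sq, hs, one_pow]

theorem affineSeq_recurrence (hs : s ^ 2 = 1) {k : ℕ} (hk : 0 < k) :
    2 * s * affineSeq s α γ k = affineSeq s α γ (k - 1) + affineSeq s α γ (k + 1) := by
  obtain ⟨j, rfl⟩ := Nat.exists_eq_add_of_lt hk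
  simp only [affineSeq, zero_add, pow_succ]
  push_cast
  linear_combination s ^ j * (α + j * γ) * hs

theorem affineSeq_casoratian (hs : s ^ 2 = 1) (i : ℕ) :
    affineSeq s α γ (i + 1) * affineSeq s α' γ' i - affineSeq s α γ i * affineSeq s α' γ' (i + 1)
      = s * (γ * α' - α * γ') := by
  simp only [affineSeq, pow_succ]
  push_cast
  linear_combination s * (γ * α' - α * γ') * pow_mul_self_of_sq_eq_one hs i

theorem affineSeq_mul_affineSeq (hs : s ^ 2 = 1) (k : ℕ) :
    affineSeq s α γ k * affineSeq s α' γ' k = (α + k * γ) * (α' + k * γ') := by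
  simp only [affineSeq]
  linear_combination (α + k * γ) * (α' + k * γ') * pow_mul_self_of_sq_eq_one hs k

end AffineSeq

theorem sum_range_affine_mul_affine (α γ α' γ' : ℝ) (n : ℕ) :
    ∑ k ∈ range n, (α + k * γ) * (α' + k * γ') =
      n * α * α' + (α * γ' + α' * γ) * (n * (n - 1) / 2)
        + γ * γ' * (n * (n - 1) * (2 * n - 1) / 6) := by
  induction n with
  | zero => simp
  | succ n ih => rw [sum_range_succ, ih]; push_cast; ring

section SignedTwo

variable {n : ℕ} {s bt c : ℝ}

theorem bt_mul_affineSeq_zero (hs : s ^ 2 = 1) (hc : s * bt = 1 + c) :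
    bt * affineSeq s 1 c 0 = affineSeq s 1 c 1 := by
  simp only [affineSeq]
  push_cast
  linear_combination (-bt) * hs + s * hc

theorem ne_zero_of_isUnit_Ttilde_two_mul (hn : 2 ≤ n) (hs : s ^ 2 = 1) (hc : s * bt = 1 + c)
    (hinv : IsUnit (Ttilde n (2 * s) bt)) : c * (2 + (n - 1) * c) ≠ 0 := by
  intro hW
  obtain ⟨m, rfl⟩ := Nat.exists_eq_add_of_le' hn
  refine not_isUnit_Ttilde hn (bt_mul_affineSeq_zero hs hc)
    (fun i hi _ => affineSeq_recurrence 1 c hs hi) ?_ (by simp [affineSeq]) hinv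
  simp only [affineSeq, show m + 2 - 1 = m + 1 from rfl, show m + 2 - 2 = m from rfl, pow_succ]
  push_cast at hW ⊢
  linear_combination s ^ m * hW + s ^ m * (1 + (m + 1) * c) * hc

theorem trace_inv_Ttilde_two_mul (hn : 2 ≤ n) (hs : s ^ 2 = 1) (hc : s * bt = 1 + c)
    (hW : c * (2 + (n - 1) * c) ≠ 0) :
    trace (Ttilde n (2 * s) bt)⁻¹ =
      (n * (1 + (n - 1) * c) + c ^ 2 * (n * (n - 1) * (n - 2) / 6))
        / (s * (c * (2 + (n - 1) * c))) := by
  obtain ⟨m, rfl⟩ := Nat.exists_eq_add_of_le' hn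
  have hs₀ : s ≠ 0 := by rintro rfl; norm_num at hs
  rw [trace_inv_Ttilde hn (u := affineSeq s 1 c) (v := affineSeq s (1 + ((m + 2 : ℕ) - 1) * c) (-c))
    (bt_mul_affineSeq_zero hs hc) (fun i hi _ => affineSeq_recurrence _ _ hs hi) ?_
    (fun i hi _ => affineSeq_recurrence _ _ hs hi)
    (fun i _ => (affineSeq_casoratian _ _ _ _ hs i).trans (by ring)) (mul_ne_zero hs₀ hW)]
  · simp only [affineSeq_mul_affineSeq _ _ _ _ hs, sum_range_affine_mul_affine]
    ring
  · simp only [affineSeq, show m + 2 - 1 = m + 1 from rfl, show m + 2 - 2 = m from rfl, pow_succ]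
    push_cast
    linear_combination s ^ m * hc

end SignedTwo

theorem stmt4 (n : ℕ) (hn : 3 < n) (b bt : ℝ) (hb : b = 2 ∨ b = -2)
    (hinv : IsUnit (Ttilde n b bt)) :
    Matrix.trace ((Ttilde n b bt)⁻¹) =
      (n : ℝ) * ((n : ℝ) + 2) / (3 * b)
        - 2 * (bt - b) * (n : ℝ) / (3 * (1 + 2 * (bt - b) / b))
        + (bt - b) * (n : ℝ) /
            (3 * (1 + 2 * (bt - b) / b) *
              ((n : ℝ) + 1 + (2 * (bt - b) / b) * ((n : ℝ) - 1))) := by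
  obtain ⟨s, hs, rfl⟩ : ∃ s : ℝ, s ^ 2 = 1 ∧ b = 2 * s := by
    rcases hb with rfl | rfl
    exacts [⟨1, by norm_num, by norm_num⟩, ⟨-1, by norm_num, by norm_num⟩]
  have hs₀ : s ≠ 0 := by rintro rfl; norm_num at hs
  have hc : s * bt = 1 + (s * bt - 1) := by ring
  have hW := ne_zero_of_isUnit_Ttilde_two_mul (by omega) hs hc hinv
  obtain ⟨hc₀, hW₀⟩ := mul_ne_zero_iff.1 hW
  have hratio : 2 * (bt - 2 * s) / (2 * s) = s * bt - 2 := by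
    field_simp
    linear_combination (-bt) * hs
  rw [trace_inv_Ttilde_two_mul (by omega) hs hc hW, hratio,
    show 1 + (s * bt - 2) = s * bt - 1 by ring,
    show (n : ℝ) + 1 + (s * bt - 2) * (n - 1) = 2 + (n - 1) * (s * bt - 1) by ring]
  field_simp
  rcases sq_eq_one_iff.1 hs with rfl | rfl <;> ring
end

section
/- Let n > 3 be an integer and b̃ ∈ ℝ be such that T̃ₙ(2, b̃) is invertible. Then for every row index 1 ≤ i ≤ n, the sum over j = 1,…,n of the (i,j)-entries of T̃ₙ(2, b̃)⁻¹ equals (1/2)·i·(n+1−i) − (n/2)·(b̃−2)/(b̃−1). -/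
open Matrix BigOperators Finset

lemma sum_ind (n k : ℕ) (c : ℝ) :
    ∑ j : Fin n, (if (j : ℕ) = k then c else 0) = if k < n then c else 0 := by
  by_cases h : k < n
  · rw [if_pos h, Finset.sum_eq_single (⟨k, h⟩ : Fin n)]
    · simp
    · intro b _ hb
      rw [if_neg]
      intro hbk
      exact hb (Fin.ext hbk)
    · simp
  · rw [if_neg h]
    apply Finset.sum_eq_zero
    intro j _
    rw [if_neg]
    intro hj
    exact h (hj ▸ j.isLt)

lemma rowsum (n : ℕ) (b bt : ℝ) (f : ℕ → ℝ) (i : Fin n) :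
    ∑ j : Fin n, Ttilde n b bt i j * f j =
      (if (i : ℕ) = 0 ∨ (i : ℕ) = n - 1 then bt else b) * f (i : ℕ)
      + (if (i : ℕ) + 1 < n then -f ((i : ℕ) + 1) else 0)
      + (if (i : ℕ) ≠ 0 then -f ((i : ℕ) - 1) else 0) := by
  have hsplit : ∀ j : Fin n, Ttilde n b bt i j * f j =
      (if (j : ℕ) = (i : ℕ) then
        (if (i : ℕ) = 0 ∨ (i : ℕ) = n - 1 then bt else b) * f (i : ℕ) else 0)
      + (if (j : ℕ) = (i : ℕ) + 1 then -f ((i : ℕ) + 1) else 0)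
      + (if (j : ℕ) + 1 = (i : ℕ) then -f ((i : ℕ) - 1) else 0) := by
    intro j
    simp only [Ttilde, Matrix.of_apply]
    by_cases h1 : (i : ℕ) = (j : ℕ)
    · have c2 : ¬ ((j : ℕ) = (i : ℕ) + 1) := by omega
      have c3 : ¬ ((j : ℕ) + 1 = (i : ℕ)) := by omega
      rw [if_pos h1, if_pos h1.symm, if_neg c2, if_neg c3, h1]
      ring
    · have c1 : ¬ ((j : ℕ) = (i : ℕ)) := fun h => h1 h.symm
      by_cases h2 : (i : ℕ) + 1 = (j : ℕ)
      · have c3 : ¬ ((j : ℕ) + 1 = (i : ℕ)) := by omega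
        rw [if_neg h1, if_pos (Or.inl h2), if_neg c1, if_pos h2.symm, if_neg c3, h2]
        ring
      · have c2 : ¬ ((j : ℕ) = (i : ℕ) + 1) := fun h => h2 h.symm
        by_cases h3 : (j : ℕ) + 1 = (i : ℕ)
        · have e : (i : ℕ) - 1 = (j : ℕ) := by omega
          rw [if_neg h1, if_pos (Or.inr h3), if_neg c1, if_neg c2, if_pos h3, e]
          ring
        · rw [if_neg h1, if_neg (not_or.mpr ⟨h2, h3⟩), if_neg c1, if_neg c2, if_neg h3]
          ring
  rw [Finset.sum_congr rfl (fun j _ => hsplit j), Finset.sum_add_distrib,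
    Finset.sum_add_distrib, sum_ind, sum_ind]
  congr 1
  · congr 1
    · rw [if_pos i.isLt]
  · have : ∀ j : Fin n, (if (j : ℕ) + 1 = (i : ℕ) then -f ((i : ℕ) - 1) else 0)
        = (if (j : ℕ) = (i : ℕ) - 1 then (if (i : ℕ) ≠ 0 then -f ((i : ℕ) - 1) else 0) else 0) := by
      intro j
      by_cases h : (j : ℕ) + 1 = (i : ℕ)
      · rw [if_pos h, if_pos (by omega), if_pos (by omega)]
      · rw [if_neg h]
        by_cases h' : (j : ℕ) = (i : ℕ) - 1
        · rw [if_pos h', if_neg (by omega)]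
        · rw [if_neg h']
    rw [Finset.sum_congr rfl (fun j _ => this j), sum_ind, if_pos (by omega)]

theorem stmt5 (n : ℕ) (hn : 3 < n) (bt : ℝ) (hinv : IsUnit (Ttilde n 2 bt)) :
    ∀ i : Fin n, ∑ j : Fin n, (Ttilde n 2 bt)⁻¹ i j =
      (1 / 2) * (((i : ℕ) : ℝ) + 1) * ((n : ℝ) - ((i : ℕ) : ℝ))
        - ((n : ℝ) / 2) * ((bt - 2) / (bt - 1)) := by
  set A := Ttilde n 2 bt with hA
  have hdet : IsUnit A.det := (Matrix.isUnit_iff_isUnit_det _).mp hinv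
  have hAinv : A⁻¹ * A = 1 := Matrix.nonsing_inv_mul A hdet
  -- bt ≠ 1
  have hbt : bt ≠ 1 := by
    intro hb
    have h0 : A.mulVec (fun _ => (1 : ℝ)) = 0 := by
      funext i
      show ∑ j : Fin n, A i j * (fun _ : ℕ => (1 : ℝ)) (j : ℕ) = 0
      rw [hA, rowsum n 2 bt (fun _ => (1 : ℝ)) i]
      rcases Nat.eq_or_lt_of_le (Nat.zero_le (i : ℕ)) with h0 | hpos
      · rw [if_pos (Or.inl h0.symm), if_pos (by omega), if_neg (by omega), hb]
        ring
      · by_cases hlast : (i : ℕ) = n - 1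
        · rw [if_pos (Or.inr hlast), if_neg (by omega), if_pos (by omega), hb]
          ring
        · rw [if_neg (by omega), if_pos (by omega), if_pos (by omega)]
          ring
    have : (fun _ => (1 : ℝ)) = (0 : Fin n → ℝ) := by
      calc (fun _ => (1 : ℝ)) = (1 : Matrix (Fin n) (Fin n) ℝ).mulVec (fun _ => 1) := by
            rw [Matrix.one_mulVec]
        _ = (A⁻¹ * A).mulVec (fun _ => 1) := by rw [hAinv]
        _ = A⁻¹.mulVec (A.mulVec (fun _ => 1)) := by rw [← Matrix.mulVec_mulVec]
        _ = A⁻¹.mulVec 0 := by rw [h0]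
        _ = 0 := Matrix.mulVec_zero _
    have := congrFun this ⟨0, by omega⟩
    simp at this
  have hb1 : bt - 1 ≠ 0 := fun h => hbt (by linarith)
  -- the explicit solution
  set x : Fin n → ℝ := fun j =>
    (1 / 2) * (((j : ℕ) : ℝ) + 1) * ((n : ℝ) - ((j : ℕ) : ℝ))
      - ((n : ℝ) / 2) * ((bt - 2) / (bt - 1)) with hx
  set xf : ℕ → ℝ := fun k =>
    (1 / 2) * ((k : ℝ) + 1) * ((n : ℝ) - (k : ℝ))
      - ((n : ℝ) / 2) * ((bt - 2) / (bt - 1)) with hxf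
  have hkey : A.mulVec x = fun _ => (1 : ℝ) := by
    funext i
    show ∑ j : Fin n, A i j * xf (j : ℕ) = 1
    rw [hA, rowsum n 2 bt xf i]
    rcases Nat.eq_or_lt_of_le (Nat.zero_le (i : ℕ)) with h0 | hpos
    · rw [if_pos (Or.inl h0.symm), if_pos (by omega), if_neg (by omega), ← h0]
      simp only [hxf]
      push_cast
      field_simp
      ring
    · by_cases hlast : (i : ℕ) = n - 1
      · rw [if_pos (Or.inr hlast), if_neg (by omega), if_pos (by omega), hlast]
        simp only [hxf]
        have e1 : ((n - 1 - 1 : ℕ) : ℝ) = (n : ℝ) - 2 := by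
          have : n - 1 - 1 = n - 2 := by omega
          rw [this, Nat.cast_sub (by omega)]; norm_num
        have e2 : ((n - 1 : ℕ) : ℝ) = (n : ℝ) - 1 := by
          rw [Nat.cast_sub (by omega)]; norm_num
        rw [e1, e2]
        field_simp
        ring
      · rw [if_neg (by omega), if_pos (by omega), if_pos (by omega)]
        simp only [hxf]
        have e1 : (((i : ℕ) - 1 : ℕ) : ℝ) = ((i : ℕ) : ℝ) - 1 := by
          rw [Nat.cast_sub (by omega)]; norm_num
        rw [e1]
        push_cast
        field_simp
        ring
  intro i
  have : ∑ j : Fin n, A⁻¹ i j = (A⁻¹.mulVec (fun _ => (1 : ℝ))) i := by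
    simp [Matrix.mulVec, dotProduct]
  rw [this, ← hkey, Matrix.mulVec_mulVec, hAinv, Matrix.one_mulVec]
end

section
/- Let n > 3 be an integer and b̃ < 0. Then T̃ₙ(2, b̃) is invertible and the sign of the (i,j)-entry of T̃ₙ(2, b̃)⁻¹ is +1 if (i,j) ∈ {2,…,n−1}×{2,…,n−1} or (i,j) ∈ {(1,n),(n,1)}, and −1 otherwise. -/
/-!
The inverse is the discrete Green's function of `Ttilde n 2 bt`. With `c = bt - 1`, the
sequences `u x = 1 + c x` and `v x = 1 + c (n - 1 - x)` solve the three-term recurrence of the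
interior rows, `u` also satisfies the first row and `v` the last one, and their Casoratian is
`W = c (2 + c (n - 1))`. Hence the inverse has entries `u (min i j) * v (max i j) / W`.
For `bt < 0` we have `c < -1` and `W > 0`, while `u x` and `v x` equal `1` at the ends
`x = 0` resp. `x = n - 1` and are negative everywhere else, which gives the sign pattern.
-/

open Matrix BigOperators Finset

lemma Ttilde_mul_apply {n : ℕ} (b bt : ℝ) (A : Matrix (Fin n) (Fin n) ℝ) (g : ℕ → ℝ)
    (k : Fin n) (hA : ∀ j : Fin n, A j k = g j) (i : Fin n) :
    (Ttilde n b bt * A) i k =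
      (if (i : ℕ) = 0 ∨ (i : ℕ) = n - 1 then bt else b) * g i
        - (if 0 < (i : ℕ) then g (i - 1) else 0) - (if (i : ℕ) + 1 < n then g (i + 1) else 0) := by
  set d := if (i : ℕ) = 0 ∨ (i : ℕ) = n - 1 then bt else b
  have entry : ∀ j : ℕ, (if (i : ℕ) = j then d
      else if (i : ℕ) + 1 = j ∨ j + 1 = (i : ℕ) then (-1 : ℝ) else 0) * g j =
      (if (i : ℕ) = j then d * g j else 0)
        - (if (i : ℕ) - 1 = j then (if 0 < (i : ℕ) then g j else 0) else 0)
        - (if (i : ℕ) + 1 = j then g j else 0) := by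
    intro j
    split_ifs <;> first | omega | ring
  simp only [mul_apply, hA]
  refine (Fin.sum_univ_eq_sum_range (fun j => (if (i : ℕ) = j then d
      else if (i : ℕ) + 1 = j ∨ j + 1 = (i : ℕ) then (-1 : ℝ) else 0) * g j) n).trans ?_
  simp only [entry, sum_sub_distrib, sum_ite_eq, mem_range, i.isLt, Nat.sub_lt_of_lt i.isLt,
    if_true]

noncomputable def tildeGreen (n : ℕ) (c : ℝ) : Matrix (Fin n) (Fin n) ℝ :=
  of fun i j => (1 + c * min (i : ℕ) (j : ℕ)) * (1 + c * (n - 1 - max (i : ℕ) (j : ℕ)))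
    / (c * (2 + c * (n - 1)))

lemma Ttilde_two_mul_tildeGreen {n : ℕ} (hn : 2 ≤ n) {c : ℝ} (hc : c ≠ 0)
    (hW : 2 + c * (n - 1) ≠ 0) : Ttilde n 2 (1 + c) * tildeGreen n c = 1 := by
  set u : ℕ → ℝ := fun j => 1 + c * j
  set v : ℕ → ℝ := fun j => 1 + c * (n - 1 - j)
  set W := c * (2 + c * (n - 1))
  ext i k
  set g : ℕ → ℝ := fun j => u (min j k) * v (max j k) / W
  have hleft : ∀ j ≤ (k : ℕ), g j = u j * v k / W := fun j hj => by
    simp only [g, min_eq_left hj, max_eq_right hj]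
  have hright : ∀ j ≥ (k : ℕ), g j = u k * v j / W := fun j hj => by
    simp only [g, min_eq_right hj, max_eq_left hj]
  have hi := i.isLt
  have hk := k.isLt
  rw [Ttilde_mul_apply 2 (1 + c) _ g k (fun j => rfl)]
  rcases lt_trichotomy (i : ℕ) k with hik | hik | hik
  -- above the diagonal, column `k` is a multiple of `u`, killed by every row but the last
  · rw [one_apply_ne (by rw [Ne, Fin.ext_iff]; omega), hleft _ hik.le, hleft _ (by omega),
      hleft _ hik, if_pos (by omega : (i : ℕ) + 1 < n)]
    rcases hi0 : (i : ℕ) with _ | a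
    · rw [if_pos (Or.inl rfl), if_neg (lt_irrefl 0)]
      simp only [u]; push_cast; ring
    · rw [if_neg (by omega), if_pos (by omega)]
      simp only [u]; push_cast; ring
  -- on the diagonal, each row evaluates the Casoratian of `u` and `v`, which is `W`
  · obtain rfl : i = k := Fin.ext hik
    rw [one_apply_eq, hleft _ le_rfl, hleft _ (Nat.sub_le _ 1), hright _ (Nat.le_succ _)]
    rcases hi0 : (i : ℕ) with _ | a
    · rw [if_pos (by omega), if_neg (by omega), if_pos (by omega)]
      simp only [u, v, W]; push_cast; field_simp; ring
    by_cases hlast : a + 1 + 1 < n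
    · rw [if_neg (by omega), if_pos (by omega), if_pos hlast]
      simp only [u, v, W]; push_cast; field_simp; ring
    · obtain rfl : n = a + 2 := by omega
      rw [if_pos (by omega), if_pos (by omega), if_neg hlast]
      simp only [u, v, W]; push_cast at hW ⊢; field_simp; ring
  -- below the diagonal, column `k` is a multiple of `v`, killed by every row but the first
  · rw [one_apply_ne (by rw [Ne, Fin.ext_iff]; omega), hright _ hik.le, hright _ (by omega),
      hright _ (by omega), if_pos (by omega : 0 < (i : ℕ))]
    obtain ⟨a, ha⟩ : ∃ a, (i : ℕ) = a + 1 := ⟨(i : ℕ) - 1, by omega⟩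
    rw [ha, Nat.add_sub_cancel]
    by_cases hlast : a + 1 + 1 < n
    · rw [if_neg (by omega), if_pos hlast]
      simp only [v]; push_cast; ring
    · obtain rfl : n = a + 2 := by omega
      rw [if_pos (by omega), if_neg hlast]
      simp only [v]; push_cast; ring

lemma tildeGreen_denominator_pos {n : ℕ} (hn : 3 ≤ n) {c : ℝ} (hc : c < -1) :
    0 < c * (2 + c * (n - 1)) := by
  have : (3 : ℝ) ≤ n := by exact_mod_cast hn
  exact mul_pos_of_neg_of_neg (by linarith) (by nlinarith)

lemma one_add_mul_natCast_neg {c : ℝ} (hc : c < -1) {m : ℕ} (hm : m ≠ 0) : 1 + c * m < 0 := by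
  have : (1 : ℝ) ≤ m := by exact_mod_cast Nat.one_le_iff_ne_zero.mpr hm
  nlinarith

lemma sign_one_add_mul_mul_one_add_mul_div {c W : ℝ} (hc : c < -1) (hW : 0 < W) (a b : ℕ) :
    Real.sign ((1 + c * a) * (1 + c * b) / W) = if (a = 0 ↔ b = 0) then 1 else -1 := by
  have hua := @one_add_mul_natCast_neg c hc a
  have hub := @one_add_mul_natCast_neg c hc b
  rcases eq_or_ne a 0 with rfl | ha0 <;> rcases eq_or_ne b 0 with rfl | hb0
  · simpa using Real.sign_of_pos hW
  · simpa [hb0] using Real.sign_of_neg (div_neg_of_neg_of_pos (hub hb0) hW)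
  · simpa [ha0] using Real.sign_of_neg (div_neg_of_neg_of_pos (hua ha0) hW)
  · simpa [ha0, hb0] using Real.sign_of_pos (div_pos (mul_pos_of_neg_of_neg (hua ha0) (hub hb0)) hW)

lemma sign_tildeGreen_apply {n : ℕ} (hn : 3 ≤ n) {c : ℝ} (hc : c < -1) (i j : Fin n) :
    Real.sign (tildeGreen n c i j) =
      if (min (i : ℕ) j = 0 ↔ n - 1 - max (i : ℕ) j = 0) then 1 else -1 := by
  have hmax : max (i : ℕ) j + 1 ≤ n := by omega
  have hcast : (n : ℝ) - 1 - (max (i : ℕ) j : ℕ) = (n - 1 - max (i : ℕ) j : ℕ) := by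
    rw [Nat.sub_sub, Nat.cast_sub (by omega)]
    push_cast
    ring
  rw [← sign_one_add_mul_mul_one_add_mul_div hc (tildeGreen_denominator_pos hn hc), ← hcast]
  rfl

theorem stmt9 (n : ℕ) (hn : 3 < n) (bt : ℝ) (hbt : bt < 0) :
    IsUnit (Ttilde n 2 bt) ∧
    ∀ i j : Fin n,
      Real.sign ((Ttilde n 2 bt)⁻¹ i j) =
        if (1 ≤ (i : ℕ) ∧ (i : ℕ) ≤ n - 2 ∧ 1 ≤ (j : ℕ) ∧ (j : ℕ) ≤ n - 2)
            ∨ ((i : ℕ) = 0 ∧ (j : ℕ) = n - 1) ∨ ((i : ℕ) = n - 1 ∧ (j : ℕ) = 0)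
        then 1 else -1 := by
  have hc : bt - 1 < -1 := by linarith
  have hW := tildeGreen_denominator_pos hn.le hc
  have hmul : Ttilde n 2 bt * tildeGreen n (bt - 1) = 1 := by
    simpa using Ttilde_two_mul_tildeGreen (by omega) (left_ne_zero_of_mul hW.ne')
      (right_ne_zero_of_mul hW.ne')
  refine ⟨(isUnit_iff_isUnit_det _).mpr (isUnit_det_of_right_inverse hmul), fun i j => ?_⟩
  rw [inv_eq_right_inv hmul, sign_tildeGreen_apply hn.le hc]
  exact if_congr (by omega) rfl rfl
end

section
/- Let n > 3 be an integer and b̃ ∈ ℝ be such that T̃ₙ(−2, b̃) is invertible, and set β = b̃ + 2. Then for every row index 1 ≤ i ≤ n, the sum over j = 1,…,n of the (i,j)-entries of T̃ₙ(−2, b̃)⁻¹ equals ((−1)^i − 1)/4 + (−1)^i·(βn − i(β+1)) / (2(n+1−β(n−1))) if n is even, and equals ((−1)^i − 1)/4 + (−1)^i·β/(2(1−β)) if n is odd. -/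
open Matrix BigOperators Finset

lemma trisum (n : ℕ) (b bt : ℝ) (i : Fin n) (g : ℕ → ℝ) :
    ∑ j : Fin n, Ttilde n b bt i j * g (j : ℕ) =
      (if (i:ℕ) = 0 ∨ (i:ℕ) = n - 1 then bt else b) * g i
        - (if (i:ℕ) + 1 < n then g ((i:ℕ)+1) else 0)
        - (if 0 < (i:ℕ) then g ((i:ℕ)-1) else 0) := by
  have hsplit : ∀ j : Fin n, Ttilde n b bt i j * g (j:ℕ) =
      (if j = i then (if (i:ℕ)=0 ∨ (i:ℕ)=n-1 then bt else b) * g (j:ℕ) else 0)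
      + ((if (j:ℕ) = (i:ℕ)+1 then -g (j:ℕ) else 0)
      + (if (j:ℕ)+1 = (i:ℕ) then -g (j:ℕ) else 0)) := by
    intro j
    simp only [Ttilde, Matrix.of_apply, Fin.ext_iff]
    split_ifs <;> (try omega) <;> ring
  rw [Finset.sum_congr rfl (fun j _ => hsplit j), Finset.sum_add_distrib,
    Finset.sum_add_distrib, Finset.sum_ite_eq']
  have e2 : (∑ j : Fin n, if (j:ℕ) = (i:ℕ)+1 then -g (j:ℕ) else 0)
      = -(if (i:ℕ) + 1 < n then g ((i:ℕ)+1) else 0) := by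
    by_cases h : (i:ℕ) + 1 < n
    · have : ∀ j : Fin n, ((j:ℕ) = (i:ℕ)+1) ↔ j = ⟨(i:ℕ)+1, h⟩ := by
        intro j; simp [Fin.ext_iff]
      simp_rw [this]
      rw [Finset.sum_ite_eq']
      simp [h]
    · have : ∀ j : Fin n, ¬((j:ℕ) = (i:ℕ)+1) := by
        intro j; have := j.isLt; omega
      simp [this, h]
  have e3 : (∑ j : Fin n, if (j:ℕ)+1 = (i:ℕ) then -g (j:ℕ) else 0)
      = -(if 0 < (i:ℕ) then g ((i:ℕ)-1) else 0) := by
    by_cases h : 0 < (i:ℕ)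
    · have hlt : (i:ℕ) - 1 < n := by have := i.isLt; omega
      have : ∀ j : Fin n, ((j:ℕ)+1 = (i:ℕ)) ↔ j = ⟨(i:ℕ)-1, hlt⟩ := by
        intro j; simp [Fin.ext_iff]; omega
      simp_rw [this]
      rw [Finset.sum_ite_eq']
      simp [h]
    · have : ∀ j : Fin n, ¬((j:ℕ)+1 = (i:ℕ)) := by intro j; omega
      simp [this, h]
  rw [e2, e3]
  simp
  ring

lemma hdenom (m : ℕ) (bt : ℝ)
    (hinv : IsUnit (Ttilde (m+4) (-2) bt)) :
    (bt + 1) * (((m:ℝ)+4) + 1 - (bt+2)*(((m:ℝ)+4)-1)) ≠ 0 := by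
  intro h0
  set n := m + 4 with hn
  set A := Ttilde n (-2) bt with hA
  have hdet : IsUnit A.det := (Matrix.isUnit_iff_isUnit_det A).mp hinv
  set w : ℕ → ℝ := fun k => (-1)^k * (1 + (-(bt+1))*k) with hw
  have hker : A *ᵥ (fun j : Fin n => w (j:ℕ)) = 0 := by
    funext r
    show ∑ j : Fin n, A r j * w (j:ℕ) = 0
    rw [trisum]
    rcases Nat.lt_or_ge (r:ℕ) 1 with hr | hr
    · have hr0 : (r:ℕ) = 0 := by omega
      simp only [hr0, hw, hn]
      norm_num
    · rcases Nat.lt_or_ge (r:ℕ) (n-1) with hr1 | hr1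
      · -- interior
        obtain ⟨k, hk⟩ : ∃ k, (r:ℕ) = k + 1 := ⟨(r:ℕ)-1, by omega⟩
        have c1 : ¬((r:ℕ) = 0 ∨ (r:ℕ) = n - 1) := by omega
        have c2 : (r:ℕ) + 1 < n := by omega
        have c3 : 0 < (r:ℕ) := by omega
        rw [if_neg c1, if_pos c2, if_pos c3, hk]
        have e1 : k + 1 - 1 = k := by omega
        rw [e1]
        simp only [hw]
        push_cast
        simp only [pow_succ]
        ring
      · have hrn : (r:ℕ) = n - 1 := by have := r.isLt; omega
        have c1 : ((r:ℕ) = 0 ∨ (r:ℕ) = n - 1) := Or.inr hrn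
        have c2 : ¬((r:ℕ) + 1 < n) := by omega
        have c3 : 0 < (r:ℕ) := by omega
        rw [if_pos c1, if_neg c2, if_pos c3]
        have e1 : (r:ℕ) = m + 3 := by omega
        rw [e1]
        have e3 : m + 3 - 1 = m + 2 := by omega
        rw [e3]
        simp only [hw]
        push_cast
        simp only [pow_succ]
        linear_combination (-(-1:ℝ)^m) * h0
  have hzero : (fun j : Fin n => w (j:ℕ)) = 0 := by
    have h2 := congrArg (fun u => A⁻¹ *ᵥ u) hker
    simpa [Matrix.mulVec_mulVec, Matrix.nonsing_inv_mul A hdet] using h2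
  have h1 := congrFun hzero ⟨0, by omega⟩
  simp [hw] at h1

theorem stmt17 (n : ℕ) (hn : 3 < n) (bt : ℝ) (hinv : IsUnit (Ttilde n (-2) bt)) :
    ∀ i : Fin n, ∑ j : Fin n, (Ttilde n (-2) bt)⁻¹ i j =
      if Even n then
        ((-1 : ℝ) ^ ((i : ℕ) + 1) - 1) / 4
          + (-1 : ℝ) ^ ((i : ℕ) + 1) *
              ((bt + 2) * (n : ℝ) - (((i : ℕ) : ℝ) + 1) * ((bt + 2) + 1))
            / (2 * ((n : ℝ) + 1 - (bt + 2) * ((n : ℝ) - 1)))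
      else
        ((-1 : ℝ) ^ ((i : ℕ) + 1) - 1) / 4
          + (-1 : ℝ) ^ ((i : ℕ) + 1) * (bt + 2) / (2 * (1 - (bt + 2))) := by
  obtain ⟨m, rfl⟩ : ∃ m, n = m + 4 := ⟨n - 4, by omega⟩
  intro i
  set A := Ttilde (m+4) (-2) bt with hA
  have hdet : IsUnit A.det := (Matrix.isUnit_iff_isUnit_det A).mp hinv
  have hden := hdenom m bt hinv
  have hb1 : bt + 1 ≠ 0 := fun h => hden (by rw [h]; ring)
  have hD : ((m:ℝ)+4) + 1 - (bt+2)*(((m:ℝ)+4)-1) ≠ 0 :=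
    fun h => hden (by rw [h]; ring)
  -- the candidate solution vector
  set vg : ℕ → ℝ := fun k =>
    if Even (m+4) then
      ((-1 : ℝ) ^ (k + 1) - 1) / 4
        + (-1 : ℝ) ^ (k + 1) *
            ((bt + 2) * ((m+4 : ℕ) : ℝ) - ((k : ℝ) + 1) * ((bt + 2) + 1))
          / (2 * (((m+4 : ℕ) : ℝ) + 1 - (bt + 2) * (((m+4 : ℕ) : ℝ) - 1)))
    else
      ((-1 : ℝ) ^ (k + 1) - 1) / 4
        + (-1 : ℝ) ^ (k + 1) * (bt + 2) / (2 * (1 - (bt + 2))) with hvg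
  have hsol : A *ᵥ (fun j : Fin (m+4) => vg (j:ℕ)) = fun _ => 1 := by
    funext r
    show ∑ j : Fin (m+4), A r j * vg (j:ℕ) = 1
    rw [trisum]
    rcases Nat.lt_or_ge (r:ℕ) 1 with hr | hr
    · -- first row
      have hr0 : (r:ℕ) = 0 := by omega
      have c1 : ((r:ℕ) = 0 ∨ (r:ℕ) = m+4-1) := Or.inl hr0
      have c2 : (r:ℕ) + 1 < m+4 := by omega
      have c3 : ¬ (0 < (r:ℕ)) := by omega
      rw [if_pos c1, if_neg c3, if_pos c2, hr0]
      simp only [hvg]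
      by_cases hpar : Even (m+4)
      · rw [if_pos hpar, if_pos hpar]
        push_cast
        norm_num
        field_simp
        ring
      · rw [if_neg hpar, if_neg hpar]
        have h2 : 1 - (bt+2) ≠ 0 := fun h => hb1 (by linarith [h])
        push_cast
        norm_num
        field_simp
        ring
    · rcases Nat.lt_or_ge (r:ℕ) (m+4-1) with hr1 | hr1
      · -- interior row
        obtain ⟨k, hk⟩ : ∃ k, (r:ℕ) = k + 1 := ⟨(r:ℕ)-1, by omega⟩
        have c1 : ¬((r:ℕ) = 0 ∨ (r:ℕ) = m+4-1) := by omega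
        have c2 : (r:ℕ) + 1 < m+4 := by omega
        have c3 : 0 < (r:ℕ) := by omega
        rw [if_neg c1, if_pos c2, if_pos c3, hk]
        have e1 : k + 1 - 1 = k := by omega
        rw [e1]
        simp only [hvg]
        by_cases hpar : Even (m+4)
        · rw [if_pos hpar, if_pos hpar, if_pos hpar]
          push_cast
          simp only [pow_succ]
          field_simp
          ring
        · rw [if_neg hpar, if_neg hpar, if_neg hpar]
          have h2 : 1 - (bt+2) ≠ 0 := fun h => hb1 (by linarith [h])
          push_cast
          simp only [pow_succ]
          field_simp
          ring
      · -- last row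
        have hrn : (r:ℕ) = m+4-1 := by have := r.isLt; omega
        have c1 : ((r:ℕ) = 0 ∨ (r:ℕ) = m+4-1) := Or.inr hrn
        have c2 : ¬((r:ℕ) + 1 < m+4) := by omega
        have c3 : 0 < (r:ℕ) := by omega
        rw [if_pos c1, if_neg c2, if_pos c3]
        have e1 : (r:ℕ) = m + 3 := by omega
        rw [e1]
        have e3 : m + 3 - 1 = m + 2 := by omega
        rw [e3]
        simp only [hvg]
        by_cases hpar : Even (m+4)
        · rw [if_pos hpar, if_pos hpar]
          have hm : Even m := by rcases hpar with ⟨t, ht⟩; exact ⟨t-2, by omega⟩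
          have hp : (-1:ℝ)^m = 1 := hm.neg_one_pow
          push_cast
          simp only [pow_succ, hp]
          field_simp
          ring
        · rw [if_neg hpar, if_neg hpar]
          have hm : Odd m := by
            rcases Nat.even_or_odd m with h | h
            · exact absurd (by rcases h with ⟨t, ht⟩; exact ⟨t+2, by omega⟩) hpar
            · exact h
          have hp : (-1:ℝ)^m = -1 := hm.neg_one_pow
          have h2 : 1 - (bt+2) ≠ 0 := fun h => hb1 (by linarith [h])
          push_cast
          simp only [pow_succ, hp]
          field_simp
          ring
  -- conclude
  have hcalc : (fun j : Fin (m+4) => vg (j:ℕ)) = A⁻¹ *ᵥ (fun _ => (1:ℝ)) := by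
    rw [← hsol, Matrix.mulVec_mulVec, Matrix.nonsing_inv_mul A hdet, Matrix.one_mulVec]
  have hfin := congrFun hcalc i
  have : (A⁻¹ *ᵥ (fun _ => (1:ℝ))) i = ∑ j : Fin (m+4), A⁻¹ i j := by
    simp [Matrix.mulVec, dotProduct]
  rw [this] at hfin
  rw [← hfin]
end
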